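/- Let Θ, Θ' be n×K clustering matrices with n_max = max over both of the largest class size, and let B be a symmetric K×K matrix with ‖B‖ ≤ C·α. If Θ and Θ' differ in at most m rows, then ‖Θ' B Θ'ᵀ − Θ B Θᵀ‖ ≤ 2·C·α·√(2 m n_max). -/

import Mathlib

open Matrix

noncomputable def specNorm {m n : ℕ} (M : Matrix (Fin m) (Fin n) ℝ) : ℝ :=
  ‖LinearMap.toContinuousLinearMap (Matrix.toEuclideanLin M)‖

def IsClusterMatrix {n K : ℕ} (Θ : Matrix (Fin n) (Fin K) ℝ) : Prop :=
  (∀ i k, Θ i k = 0 ∨ Θ i k = 1) ∧ ∀ i, ∑ k, Θ i k = 1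

noncomputable def eigDesc {n : ℕ} (M : Matrix (Fin n) (Fin n) ℝ)
    (hM : M.IsHermitian) : ℕ → ℝ :=
  fun j => if h : j < n then hM.eigenvalues (Tuple.sort hM.eigenvalues (Fin.rev ⟨j, h⟩)) else 0

/-!
Split `Θ' B Θ'ᵀ - Θ B Θᵀ = (Θ' - Θ) B Θ'ᵀ + Θ B (Θ' - Θ)ᵀ` and bound each term by
submultiplicativity of the spectral norm. Since `Θᵀ Θ` is the diagonal matrix of class sizes,
the C*-identity gives `‖Θ‖ ≤ √n_max`, and likewise for `Θ'`. The matrix `Θ' - Θ` has at most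
`m` nonzero rows, each of squared length `2`, so its Frobenius norm, which dominates its
spectral norm, is at most `√(2m)`.
-/

open scoped Matrix.Norms.L2Operator
open Finset

theorem specNorm_eq_l2_opNorm {m n : ℕ} (M : Matrix (Fin m) (Fin n) ℝ) : specNorm M = ‖M‖ := rfl

namespace Matrix

variable {𝕜 : Type*} [RCLike 𝕜] {m n p q : Type*} [Fintype m] [Fintype n] [Fintype p] [Fintype q]
  [DecidableEq n] [DecidableEq p] [DecidableEq q]

theorem l2_opNorm_le_sqrt_sum_sq (A : Matrix m n 𝕜) : ‖A‖ ≤ √(∑ i, ∑ j, ‖A i j‖ ^ 2) := by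
  rw [l2_opNorm_def]
  refine ContinuousLinearMap.opNorm_le_bound _ (Real.sqrt_nonneg _) fun x => ?_
  rw [← Real.sqrt_sq (norm_nonneg x), ← Real.sqrt_mul (by positivity)]
  refine Real.le_sqrt_of_sq_le ?_
  simp only [LinearEquiv.trans_apply, LinearMap.coe_toContinuousLinearMap', toLpLin_apply,
    EuclideanSpace.norm_sq_eq]
  rw [sum_mul]
  gcongr with i
  calc ‖(A *ᵥ x) i‖ ^ 2 ≤ (∑ j, ‖A i j‖ * ‖x j‖) ^ 2 := by
        gcongr
        exact (norm_sum_le _ _).trans_eq (by simp [norm_mul])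
    _ ≤ (∑ j, ‖A i j‖ ^ 2) * ∑ j, ‖x j‖ ^ 2 := sum_mul_sq_le_sq_mul_sq _ _ _

theorem l2_opNorm_mul_mul_sub_mul_mul_le (A A' : Matrix m n 𝕜) (B : Matrix n p 𝕜)
    (C C' : Matrix p q 𝕜) :
    ‖A' * B * C' - A * B * C‖ ≤ ‖A' - A‖ * ‖B‖ * ‖C'‖ + ‖A‖ * ‖B‖ * ‖C' - C‖ := by
  have hsplit : A' * B * C' - A * B * C = (A' - A) * B * C' + A * B * (C' - C) := by
    simp only [Matrix.sub_mul, Matrix.mul_sub]; abel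
  rw [hsplit]
  refine (norm_add_le _ _).trans (add_le_add ?_ ?_) <;>
    exact (l2_opNorm_mul _ _).trans (by gcongr; exact l2_opNorm_mul _ _)

theorem l2_opNorm_transpose [DecidableEq m] (A : Matrix m n ℝ) : ‖Aᵀ‖ = ‖A‖ := by
  rw [← conjTranspose_eq_transpose_of_trivial, l2_opNorm_conjTranspose]

end Matrix

namespace IsClusterMatrix

variable {n K : ℕ} {Θ Θ' : Matrix (Fin n) (Fin K) ℝ}

theorem exists_eq_single (hΘ : IsClusterMatrix Θ) (i : Fin n) : ∃ k, Θ i = Pi.single k 1 := by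
  have hcard : #{k | Θ i k = 1} = 1 := by
    have hsum : ∑ k, Θ i k = #{k | Θ i k = 1} := by
      rw [card_filter, Nat.cast_sum]
      exact sum_congr rfl fun k _ => by rcases hΘ.1 i k with h | h <;> simp [h]
    exact_mod_cast hsum.symm.trans (hΘ.2 i)
  obtain ⟨k, hk⟩ := card_eq_one.1 hcard
  refine ⟨k, funext fun l => ?_⟩
  have hl : Θ i l = 1 ↔ l = k := by simpa using congrArg (l ∈ ·) hk
  rcases hΘ.1 i l with h | h <;> simp_all

theorem transpose_mul_self (hΘ : IsClusterMatrix Θ) :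
    Θᵀ * Θ = diagonal fun k => (#{i | Θ i k = 1} : ℝ) := by
  choose z hz using hΘ.exists_eq_single
  ext k l
  simp only [mul_apply, transpose_apply, hz, Pi.single_apply, mul_ite, mul_one, mul_zero,
    ite_eq_left_iff, zero_ne_one, imp_false, Decidable.not_not, diagonal_apply]
  obtain rfl | hkl := eq_or_ne k l
  · simp +contextual [sum_boole]
  · rw [if_neg hkl]
    exact sum_eq_zero fun i _ => by grind

theorem l2_opNorm_le_sqrt {N : ℕ} (hΘ : IsClusterMatrix Θ) (hN : ∀ k, #{i | Θ i k = 1} ≤ N) :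
    ‖Θ‖ ≤ √N := by
  rw [Real.le_sqrt (norm_nonneg _) (Nat.cast_nonneg _), sq, ← l2_opNorm_conjTranspose_mul_self,
    conjTranspose_eq_transpose_of_trivial, hΘ.transpose_mul_self, l2_opNorm_diagonal,
    pi_norm_le_iff_of_nonneg (Nat.cast_nonneg _)]
  intro k
  simpa using hN k

theorem sum_sq_sub_le (hΘ : IsClusterMatrix Θ) (hΘ' : IsClusterMatrix Θ') {s : Finset (Fin n)}
    (hs : ∀ i ∉ s, Θ i = Θ' i) : ∑ i, ∑ k, (Θ' i k - Θ i k) ^ 2 ≤ 2 * #s := by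
  have hrow : ∀ i, ∑ k, (Θ' i k - Θ i k) ^ 2 ≤ 2 := fun i =>
    calc ∑ k, (Θ' i k - Θ i k) ^ 2 ≤ ∑ k, (Θ' i k + Θ i k) := by
          gcongr with k
          rcases hΘ.1 i k with h | h <;> rcases hΘ'.1 i k with h' | h' <;> norm_num [h, h']
      _ = 2 := by rw [sum_add_distrib, hΘ.2 i, hΘ'.2 i]; norm_num
  rw [← sum_subset (subset_univ s) fun i _ hi => by simp [hs i hi]]
  calc ∑ i ∈ s, ∑ k, (Θ' i k - Θ i k) ^ 2 ≤ ∑ i ∈ s, (2 : ℝ) := sum_le_sum fun i _ => hrow i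
    _ = 2 * #s := by rw [sum_const, nsmul_eq_mul, mul_comm]

end IsClusterMatrix

theorem cluster_sandwich_perturbation_general {n K m : ℕ}
    (Θ Θ' : Matrix (Fin n) (Fin K) ℝ)
    (hΘ : IsClusterMatrix Θ) (hΘ' : IsClusterMatrix Θ')
    (B : Matrix (Fin K) (Fin K) ℝ)
    (C α : ℝ) (hBnorm : specNorm B ≤ C * α)
    (nmax : ℕ)
    (hnmax : nmax = max
      (Finset.univ.sup fun k => (Finset.univ.filter fun i => Θ i k = 1).card)
      (Finset.univ.sup fun k => (Finset.univ.filter fun i => Θ' i k = 1).card))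
    (hm : (@Finset.filter _ (fun i => Θ i ≠ Θ' i)
      (fun i => @instDecidableNot _ (Fintype.decidablePiFintype (Θ i) (Θ' i))) Finset.univ).card ≤ m) :
    specNorm (Θ' * B * Θ'ᵀ - Θ * B * Θᵀ) ≤ 2 * C * α * Real.sqrt (2 * m * nmax) := by
  rw [specNorm_eq_l2_opNorm] at hBnorm ⊢
  have hCα : 0 ≤ C * α := (norm_nonneg B).trans hBnorm
  have hΘn : ‖Θ‖ ≤ √nmax := hΘ.l2_opNorm_le_sqrt fun k =>
    hnmax ▸ le_max_of_le_left (le_sup (f := fun k => #{i | Θ i k = 1}) (mem_univ k))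
  have hΘ'n : ‖Θ'‖ ≤ √nmax := hΘ'.l2_opNorm_le_sqrt fun k =>
    hnmax ▸ le_max_of_le_right (le_sup (f := fun k => #{i | Θ' i k = 1}) (mem_univ k))
  -- `hm` filters with a decidability proof that is not an instance; abstracting the set avoids it.
  obtain ⟨s, hs, hsm⟩ : ∃ s : Finset (Fin n), (∀ i ∉ s, Θ i = Θ' i) ∧ #s ≤ m :=
    ⟨_, fun i hi => by simpa using hi, hm⟩
  have hdiff : ‖Θ' - Θ‖ ≤ √(2 * m) := by
    refine (l2_opNorm_le_sqrt_sum_sq _).trans (Real.sqrt_le_sqrt ?_)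
    simp only [Matrix.sub_apply, Real.norm_eq_abs, sq_abs]
    exact (hΘ.sum_sq_sub_le hΘ' hs).trans (by gcongr)
  calc ‖Θ' * B * Θ'ᵀ - Θ * B * Θᵀ‖
      ≤ ‖Θ' - Θ‖ * ‖B‖ * ‖Θ'ᵀ‖ + ‖Θ‖ * ‖B‖ * ‖Θ'ᵀ - Θᵀ‖ :=
        l2_opNorm_mul_mul_sub_mul_mul_le _ _ _ _ _
    _ ≤ √(2 * m) * (C * α) * √nmax + √nmax * (C * α) * √(2 * m) := by
        rw [← transpose_sub, l2_opNorm_transpose, l2_opNorm_transpose]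
        gcongr
    _ = 2 * C * α * √(2 * m * nmax) := by
        rw [Real.sqrt_mul' _ (Nat.cast_nonneg nmax)]; ring

theorem cluster_sandwich_perturbation {n K m : ℕ}
    (Θ Θ' : Matrix (Fin n) (Fin K) ℝ)
    (hΘ : IsClusterMatrix Θ) (hΘ' : IsClusterMatrix Θ')
    (B : Matrix (Fin K) (Fin K) ℝ) (hB : B.IsHermitian)
    (C α : ℝ) (hBnorm : specNorm B ≤ C * α)
    (nmax : ℕ)
    (hnmax : nmax = max
      (Finset.univ.sup fun k => (Finset.univ.filter fun i => Θ i k = 1).card)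
      (Finset.univ.sup fun k => (Finset.univ.filter fun i => Θ' i k = 1).card))
    (hm : (@Finset.filter _ (fun i => Θ i ≠ Θ' i)
      (fun i => @instDecidableNot _ (Fintype.decidablePiFintype (Θ i) (Θ' i))) Finset.univ).card ≤ m) :
    specNorm (Θ' * B * Θ'ᵀ - Θ * B * Θᵀ) ≤ 2 * C * α * Real.sqrt (2 * m * nmax) :=
  cluster_sandwich_perturbation_general Θ Θ' hΘ hΘ' B C α hBnorm nmax hnmax hm
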